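/- Let ρ be a pseudometric on a metric space (Y,d), let X ⊆ Y be nonempty and closed, and suppose ρ has property (*): for every sequence (yₙ) in Y and x ∈ X, if ρ(yₙ,x) → 0 and d(yₙ,X) → 0, then d(yₙ,x) → 0. Then for every constant c > 0, the function ρ + c·d* (where d*(y,y') = min(d(y,y'), d(y,X)+d(y',X))) is a metric on Y whose topology is finer than or equal to that of d, i.e., convergence in ρ + c·d* implies convergence in d. -/

import Mathlib

/-!
`d*` is a pseudometric, so `ρ + c·d*` is one too. For domination, let `ρ(yₙ,x) → 0` and `d*(yₙ,x) → 0`.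
If `x ∈ X` then `d*(yₙ,x) = d(yₙ,X)`, and property (*) gives `d(yₙ,x) → 0`. If `x ∉ X` then
`d(x,X) > 0` since `X` is closed, and as soon as `d*(yₙ,x) < d(x,X)` the minimum defining
`d*(yₙ,x)` must be `d(yₙ,x)`. Separation follows by applying domination to a constant sequence.
-/

open Filter Topology Metric

def IsPseudometric {Y : Type*} (d : Y → Y → ℝ) : Prop :=
  (∀ x, d x x = 0) ∧ (∀ x y, 0 ≤ d x y) ∧ (∀ x y, d x y = d y x) ∧
    (∀ x y z, d x z ≤ d x y + d y z)

/-- `d*(y,y') = min(d(y,y'), d(y,X) + d(y',X))`. -/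
noncomputable def dStar {Y : Type*} [MetricSpace Y] (X : Set Y) (y y' : Y) : ℝ :=
  min (dist y y') (Metric.infDist y X + Metric.infDist y' X)

theorem IsPseudometric.add_const_mul {Y : Type*} {ρ σ : Y → Y → ℝ} (hρ : IsPseudometric ρ)
    (hσ : IsPseudometric σ) {c : ℝ} (hc : 0 ≤ c) :
    IsPseudometric (fun y y' => ρ y y' + c * σ y y') := by
  obtain ⟨hρ_self, hρ_nonneg, hρ_comm, hρ_tri⟩ := hρ
  obtain ⟨hσ_self, hσ_nonneg, hσ_comm, hσ_tri⟩ := hσ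
  refine ⟨fun x => ?_, fun x y => ?_, fun x y => ?_, fun x y z => ?_⟩
  · simp [hρ_self, hσ_self]
  · exact add_nonneg (hρ_nonneg x y) (mul_nonneg hc (hσ_nonneg x y))
  · simp only [hρ_comm x y, hσ_comm x y]
  · dsimp only
    linarith [hρ_tri x y z, mul_le_mul_of_nonneg_left (hσ_tri x y z) hc]

section dStar

variable {Y : Type*} [MetricSpace Y] (X : Set Y)

theorem dStar_nonneg (y y' : Y) : 0 ≤ dStar X y y' :=
  le_min dist_nonneg (add_nonneg infDist_nonneg infDist_nonneg)

theorem dStar_self (y : Y) : dStar X y y = 0 := by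
  rw [dStar, dist_self]
  exact min_eq_left (add_nonneg infDist_nonneg infDist_nonneg)

theorem dStar_comm (y y' : Y) : dStar X y y' = dStar X y' y := by
  rw [dStar, dStar, dist_comm, add_comm]

theorem dStar_triangle (x y z : Y) : dStar X x z ≤ dStar X x y + dStar X y z := by
  have hx : infDist x X ≤ infDist y X + dist x y := infDist_le_infDist_add_dist
  have hz : infDist z X ≤ infDist y X + dist y z :=
    dist_comm z y ▸ infDist_le_infDist_add_dist
  have hy : 0 ≤ infDist y X := infDist_nonneg
  unfold dStar
  rcases min_cases (dist x y) (infDist x X + infDist y X) with ⟨hxy, _⟩ | ⟨hxy, _⟩ <;>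
    rcases min_cases (dist y z) (infDist y X + infDist z X) with ⟨hyz, _⟩ | ⟨hyz, _⟩ <;>
    rw [hxy, hyz]
  · exact (min_le_left _ _).trans (dist_triangle x y z)
  all_goals exact (min_le_right _ _).trans (by linarith)

theorem isPseudometric_dStar : IsPseudometric (dStar X) :=
  ⟨dStar_self X, dStar_nonneg X, dStar_comm X, dStar_triangle X⟩

theorem dStar_eq_infDist_of_mem {x : Y} (hx : x ∈ X) (y : Y) : dStar X y x = infDist y X := by
  rw [dStar, infDist_zero_of_mem hx, add_zero, min_eq_right (infDist_le_dist_of_mem hx)]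

theorem dStar_eq_dist_of_lt_infDist {x y : Y} (h : dStar X y x < infDist x X) :
    dStar X y x = dist y x := by
  refine min_eq_left (not_lt.mp fun hlt => h.not_ge ?_)
  rw [dStar, min_eq_right hlt.le]
  exact le_add_of_nonneg_left infDist_nonneg

theorem tendsto_dist_of_tendsto_dStar {X : Set Y} (hne : X.Nonempty) (hcl : IsClosed X)
    {ρ : Y → Y → ℝ}
    (hstar : ∀ (y : ℕ → Y) (x : Y), x ∈ X →
      Tendsto (fun n => ρ (y n) x) atTop (𝓝 0) →
      Tendsto (fun n => infDist (y n) X) atTop (𝓝 0) →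
      Tendsto (fun n => dist (y n) x) atTop (𝓝 0))
    {y : ℕ → Y} {x : Y} (hρ : Tendsto (fun n => ρ (y n) x) atTop (𝓝 0))
    (hd : Tendsto (fun n => dStar X (y n) x) atTop (𝓝 0)) :
    Tendsto (fun n => dist (y n) x) atTop (𝓝 0) := by
  by_cases hx : x ∈ X
  · simp only [dStar_eq_infDist_of_mem X hx] at hd
    exact hstar y x hx hρ hd
  · have hpos : 0 < infDist x X := (hcl.notMem_iff_infDist_pos hne).mp hx
    refine hd.congr' ?_
    filter_upwards [hd.eventually (gt_mem_nhds hpos)] with n hn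
    exact dStar_eq_dist_of_lt_infDist X hn

end dStar

theorem tendsto_zero_of_tendsto_add_const_mul {α : Type*} {l : Filter α} {f g : α → ℝ} {c : ℝ}
    (hc : 0 < c) (hf : ∀ a, 0 ≤ f a) (hg : ∀ a, 0 ≤ g a)
    (h : Tendsto (fun a => f a + c * g a) l (𝓝 0)) :
    Tendsto f l (𝓝 0) ∧ Tendsto g l (𝓝 0) := by
  refine ⟨squeeze_zero hf (fun a => le_add_of_nonneg_right (mul_nonneg hc.le (hg a))) h, ?_⟩
  refine squeeze_zero hg (fun a => ?_) (by simpa using h.div_const c)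
  rw [le_div_iff₀ hc, mul_comm]
  exact le_add_of_nonneg_left (hf a)

theorem rho_add_dStar_dominating_metric {Y : Type*} [MetricSpace Y]
    (X : Set Y) (hne : X.Nonempty) (hcl : IsClosed X)
    (ρ : Y → Y → ℝ) (hρ : IsPseudometric ρ)
    -- property (*)
    (hstar : ∀ (y : ℕ → Y) (x : Y), x ∈ X →
      Tendsto (fun n => ρ (y n) x) atTop (𝓝 0) →
      Tendsto (fun n => Metric.infDist (y n) X) atTop (𝓝 0) →
      Tendsto (fun n => dist (y n) x) atTop (𝓝 0))
    (c : ℝ) (hc : 0 < c) :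
    -- `ρ + c·d*` is a metric
    IsPseudometric (fun y y' => ρ y y' + c * dStar X y y') ∧
    (∀ y y' : Y, ρ y y' + c * dStar X y y' = 0 → y = y') ∧
    -- which dominates `d`: convergence in `ρ + c·d*` implies convergence in `d`
    (∀ (y : ℕ → Y) (x : Y),
      Tendsto (fun n => ρ (y n) x + c * dStar X (y n) x) atTop (𝓝 0) →
      Tendsto (fun n => dist (y n) x) atTop (𝓝 0)) := by
  have dominates : ∀ (y : ℕ → Y) (x : Y),
      Tendsto (fun n => ρ (y n) x + c * dStar X (y n) x) atTop (𝓝 0) →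
      Tendsto (fun n => dist (y n) x) atTop (𝓝 0) := fun y x h =>
    let ⟨hρ_lim, hd_lim⟩ := tendsto_zero_of_tendsto_add_const_mul hc
      (fun n => hρ.2.1 (y n) x) (fun n => dStar_nonneg X (y n) x) h
    tendsto_dist_of_tendsto_dStar hne hcl hstar hρ_lim hd_lim
  refine ⟨hρ.add_const_mul (isPseudometric_dStar X) hc.le, fun y y' h0 => ?_, dominates⟩
  have hconst := dominates (fun _ => y) y' (by simp only [h0]; exact tendsto_const_nhds)
  exact dist_eq_zero.mp (tendsto_nhds_unique tendsto_const_nhds hconst)
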